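/- arXiv:math/0610664 — 6 statements merged into one kernel-verified Lean document; each statement's English description precedes it below -/
import Mathlib

section
/- Let H be a symmetric positive definite n×n real matrix, A an n×n real matrix, B an n-dimensional column vector, and ε > 0 a scalar. Then the matrix inequality H(A + εI) + (Aᵀ + εI)H ⪯ -(1/(2ε)) H B Bᵀ H (i.e., the left side minus the right side is negative semidefinite) holds if and only if for all vectors x ∈ ℝⁿ and all scalars f with |f| ≤ 1, one has xᵀH(Ax + Bf) + ε(xᵀHx - 1) ≤ 0. -/
/-!
Write `q = xᵀH(A + εI)x` and `b = xᵀHB`. The quadratic form of the matrix on the left is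
`-(b² + 4εq) / (2ε)` at `x`, while the constraint at `t • x` reads `t²q + t f b ≤ ε`. Since the
constraint is imposed at every point, it holds at all multiples of `x`, and a quadratic
`t²q + t f b` stays below `ε` for all `t` and `|f| ≤ 1` exactly when `b² + 4εq ≤ 0`.
-/

open Matrix

section QuadraticForm

variable {ι R : Type*} [Fintype ι] [CommRing R]

theorem dotProduct_transpose_mulVec_self (P : Matrix ι ι R) (x : ι → R) :
    x ⬝ᵥ Pᵀ *ᵥ x = x ⬝ᵥ P *ᵥ x := by
  rw [dotProduct_mulVec, vecMul_transpose, dotProduct_comm]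

theorem dotProduct_vecMulVec_self_mulVec (w x : ι → R) :
    x ⬝ᵥ vecMulVec w w *ᵥ x = (w ⬝ᵥ x) ^ 2 := by
  rw [vecMulVec_mulVec, op_smul_eq_smul, dotProduct_smul, smul_eq_mul,
    dotProduct_comm, sq]

end QuadraticForm

theorem forall_sq_mul_add_mul_le_iff {ε q b : ℝ} (hε : 0 < ε) :
    (∀ t f : ℝ, |f| ≤ 1 → t ^ 2 * q + t * f * b ≤ ε) ↔ b ^ 2 + 4 * ε * q ≤ 0 := by
  constructor
  · intro h
    rcases eq_or_ne b 0 with rfl | hb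
    · by_contra! hq
      have hq : 0 < q := by nlinarith
      have ht : ε / q * q = ε := div_mul_cancel₀ ε hq.ne'
      nlinarith [h (ε / q + 1) 0 (by simp), div_pos hε hq]
    · have ht : 2 * ε / b * b = 2 * ε := div_mul_cancel₀ _ hb
      have hneg : (2 * ε / b) ^ 2 * q ≤ -ε := by linarith [h (2 * ε / b) 1 (by simp)]
      have hscaled : (2 * ε / b * b) ^ 2 * q ≤ -ε * b ^ 2 := by
        nlinarith [mul_le_mul_of_nonneg_right hneg (sq_nonneg b)]
      rw [ht] at hscaled
      nlinarith
  · intro h t f hf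
    have hf2 : f ^ 2 ≤ 1 := by nlinarith [abs_nonneg f, sq_abs f]
    nlinarith [sq_nonneg (t * f * b - 2 * ε), mul_le_mul_of_nonneg_left hf2 (sq_nonneg (t * b))]

theorem posSemidef_smul_vecMulVec_sub_add_transpose_iff {ι : Type*} [Fintype ι]
    (P : Matrix ι ι ℝ) (w : ι → ℝ) {ε : ℝ} (hε : 0 < ε) :
    (-(1 / (2 * ε)) • vecMulVec w w - (P + Pᵀ)).PosSemidef ↔
      ∀ (x : ι → ℝ) (f : ℝ), |f| ≤ 1 → x ⬝ᵥ P *ᵥ x + f * (w ⬝ᵥ x) ≤ ε := by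
  have hsymm : (-(1 / (2 * ε)) • vecMulVec w w - (P + Pᵀ)).IsSymm := by
    refine ((IsSymm.ext fun i j => ?_).smul _).sub (isSymm_add_transpose_self P)
    simp only [vecMulVec_apply, mul_comm]
  have hform : ∀ x, x ⬝ᵥ (-(1 / (2 * ε)) • vecMulVec w w - (P + Pᵀ)) *ᵥ x
      = (2 * ε)⁻¹ * -((w ⬝ᵥ x) ^ 2 + 4 * ε * (x ⬝ᵥ P *ᵥ x)) := by
    intro x
    rw [sub_mulVec, add_mulVec, smul_mulVec, dotProduct_sub, dotProduct_add, dotProduct_smul,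
      dotProduct_vecMulVec_self_mulVec, dotProduct_transpose_mulVec_self, smul_eq_mul]
    field_simp
    ring
  have hscale : ∀ (x : ι → ℝ) (t f : ℝ),
      (t • x) ⬝ᵥ P *ᵥ (t • x) + f * (w ⬝ᵥ t • x) = t ^ 2 * (x ⬝ᵥ P *ᵥ x) + t * f * (w ⬝ᵥ x) := by
    intro x t f
    simp only [mulVec_smul, dotProduct_smul, smul_dotProduct, smul_eq_mul]
    ring
  calc _ ↔ ∀ x, (w ⬝ᵥ x) ^ 2 + 4 * ε * (x ⬝ᵥ P *ᵥ x) ≤ 0 := by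
        simp only [posSemidef_iff_dotProduct_mulVec, isHermitian_iff_isSymm, hsymm, true_and,
          star_trivial, hform, mul_nonneg_iff_of_pos_left (inv_pos.2 (mul_pos two_pos hε)),
          neg_nonneg]
    _ ↔ ∀ x t f, |f| ≤ 1 → t ^ 2 * (x ⬝ᵥ P *ᵥ x) + t * f * (w ⬝ᵥ x) ≤ ε := by
        simp only [forall_sq_mul_add_mul_le_iff hε]
    _ ↔ _ := by
        simp only [← hscale]
        exact ⟨fun h x f => by simpa using h x 1 f, fun h x t f => h (t • x) f⟩

theorem stmt_0_general {n : ℕ} (H A : Matrix (Fin n) (Fin n) ℝ) (B : Fin n → ℝ) (ε : ℝ)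
    (hε : 0 < ε) (hH : H.IsSymm) :
    ((-(1 / (2 * ε)) • vecMulVec (H.mulVec B) (H.mulVec B)
        - (H * (A + ε • (1 : Matrix (Fin n) (Fin n) ℝ))
          + (Aᵀ + ε • (1 : Matrix (Fin n) (Fin n) ℝ)) * H)).PosSemidef)
      ↔ (∀ (x : Fin n → ℝ) (f : ℝ), |f| ≤ 1 →
          x ⬝ᵥ H.mulVec (A.mulVec x + f • B) + ε * (x ⬝ᵥ H.mulVec x - 1) ≤ 0) := by
  have hT : (Aᵀ + ε • (1 : Matrix (Fin n) (Fin n) ℝ)) * H = (H * (A + ε • 1))ᵀ := by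
    rw [transpose_mul, transpose_add, transpose_smul, transpose_one, hH.eq]
  rw [hT, posSemidef_smul_vecMulVec_sub_add_transpose_iff _ _ hε]
  refine forall₂_congr fun x f => imp_congr_right fun _ => ?_
  simp only [← mulVec_mulVec, add_mulVec, smul_mulVec, one_mulVec, mulVec_add, mulVec_smul,
    dotProduct_add, dotProduct_smul, smul_eq_mul, dotProduct_comm (H *ᵥ B)]
  constructor <;> intro h <;> linarith

/-- Lemma 1: the LMI `H(A+εI) + (Aᵀ+εI)H ⪯ -(1/(2ε)) H B Bᵀ H` is equivalent to the
quadratic constraint `xᵀH(Ax+Bf) + ε(xᵀHx - 1) ≤ 0` for all `x` and all `|f| ≤ 1`. -/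
theorem stmt_0 {n : ℕ} (H A : Matrix (Fin n) (Fin n) ℝ) (B : Fin n → ℝ) (ε : ℝ)
    (hε : 0 < ε) (hH : H.IsSymm) (hHpd : H.PosDef) :
    ((-(1 / (2 * ε)) • vecMulVec (H.mulVec B) (H.mulVec B)
        - (H * (A + ε • (1 : Matrix (Fin n) (Fin n) ℝ))
          + (Aᵀ + ε • (1 : Matrix (Fin n) (Fin n) ℝ)) * H)).PosSemidef)
      ↔ (∀ (x : Fin n → ℝ) (f : ℝ), |f| ≤ 1 →
          x ⬝ᵥ H.mulVec (A.mulVec x + f • B) + ε * (x ⬝ᵥ H.mulVec x - 1) ≤ 0) :=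
  stmt_0_general H A B ε hε hH
end

section
/- Let A be an invertible n×n real matrix, B ∈ ℝⁿ, T > 0 with I - e^{-AT} invertible, and for τ ∈ [0,T] define x̂(τ) = -(I - e^{-AT})^{-1}(I - e^{-Aτ}) A^{-1} B. Consider the T-periodic input f(t) = 1 for t ∈ [nT, nT+τ) and f(t) = 0 for t ∈ [nT+τ, (n+1)T). Then the solution x(t) of dx/dt = Ax + Bf with x(0) = x̂(τ) satisfies x(T) = x(0), i.e., x̂(τ) is a fixed point of the period map. -/
open Matrix

/-!
Write `E t = exp (t • A)` and `c = A⁻¹ B`. By the semigroup law the period map is the affine map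
`x ↦ E T x + (E T - E (T - τ)) c`, so `x` is a fixed point iff `(E T - 1) x = -(E T - E (T - τ)) c`.
Factoring `E T` out of both sides, `E T - 1 = E T (1 - E (-T))` and
`E T - E (T - τ) = E T (1 - E (-τ))`, the defining equation `(1 - E (-T)) x̂ = -(1 - E (-τ)) c`
of `x̂` gives exactly this.
-/

namespace Matrix

variable {m 𝕜 : Type*} [Fintype m] [DecidableEq m] [RCLike 𝕜]

theorem exp_smul_mul_exp_smul (A : Matrix m m 𝕜) (s t : 𝕜) :
    NormedSpace.exp (s • A) * NormedSpace.exp (t • A) = NormedSpace.exp ((s + t) • A) := by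
  rw [add_smul, exp_add_of_commute _ _ ((Commute.refl A).smul_left s |>.smul_right t)]

theorem exp_smul_mul_one_sub_exp_neg_smul (A : Matrix m m 𝕜) (t s : 𝕜) :
    NormedSpace.exp (t • A) * (1 - NormedSpace.exp ((-s) • A))
      = NormedSpace.exp (t • A) - NormedSpace.exp ((t - s) • A) := by
  rw [mul_sub, mul_one, exp_smul_mul_exp_smul, ← sub_eq_add_neg]

/-- The state after one period of `x' = A x + B` on `[0, τ]` followed by `x' = A x` on `[τ, T]`. -/
noncomputable def periodMap (A : Matrix m m 𝕜) (B : m → 𝕜) (τ T : 𝕜) (x : m → 𝕜) : m → 𝕜 :=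
  NormedSpace.exp ((T - τ) • A) *ᵥ
    (NormedSpace.exp (τ • A) *ᵥ x + (NormedSpace.exp (τ • A) - 1) *ᵥ (A⁻¹ *ᵥ B))

theorem periodMap_eq (A : Matrix m m 𝕜) (B : m → 𝕜) (τ T : 𝕜) (x : m → 𝕜) :
    periodMap A B τ T x = NormedSpace.exp (T • A) *ᵥ x
      + (NormedSpace.exp (T • A) - NormedSpace.exp ((T - τ) • A)) *ᵥ (A⁻¹ *ᵥ B) := by
  have hsplit : NormedSpace.exp ((T - τ) • A) * NormedSpace.exp (τ • A) = NormedSpace.exp (T • A) := by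
    rw [exp_smul_mul_exp_smul, sub_add_cancel]
  rw [periodMap, mulVec_add, mulVec_mulVec, mulVec_mulVec, mul_sub, mul_one, hsplit]

theorem periodMap_eq_self_iff (A : Matrix m m 𝕜) (B : m → 𝕜) (τ T : 𝕜) (x : m → 𝕜) :
    periodMap A B τ T x = x ↔
      NormedSpace.exp (T • A) *ᵥ ((1 - NormedSpace.exp ((-T) • A)) *ᵥ x
        + (1 - NormedSpace.exp ((-τ) • A)) *ᵥ (A⁻¹ *ᵥ B)) = 0 := by
  rw [periodMap_eq]
  generalize A⁻¹ *ᵥ B = c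
  rw [mulVec_add, mulVec_mulVec, mulVec_mulVec, exp_smul_mul_one_sub_exp_neg_smul,
    exp_smul_mul_one_sub_exp_neg_smul, sub_self, zero_smul, NormedSpace.exp_zero,
    sub_mulVec _ 1 x, one_mulVec, ← sub_eq_zero]
  constructor <;> intro h <;> rw [← h] <;> abel

end Matrix

theorem stmt_4_general {n : ℕ} (A : Matrix (Fin n) (Fin n) ℝ) (B : Fin n → ℝ) (T τ : ℝ)
    (hIA : IsUnit ((1 : Matrix (Fin n) (Fin n) ℝ) - NormedSpace.exp ((-T) • A)))
    (xhat : Fin n → ℝ)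
    (hxhat : xhat = -((((1 : Matrix (Fin n) (Fin n) ℝ) - NormedSpace.exp ((-T) • A))⁻¹
        * ((1 : Matrix (Fin n) (Fin n) ℝ) - NormedSpace.exp ((-τ) • A)) * A⁻¹).mulVec B)) :
    (NormedSpace.exp ((T - τ) • A)).mulVec
        ((NormedSpace.exp (τ • A)).mulVec xhat
          + ((NormedSpace.exp (τ • A)) - 1).mulVec (A⁻¹.mulVec B))
      = xhat := by
  change periodMap A B τ T xhat = xhat
  have hxhat' : (1 - NormedSpace.exp ((-T) • A)) *ᵥ xhat
      = -((1 - NormedSpace.exp ((-τ) • A)) *ᵥ (A⁻¹ *ᵥ B)) := by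
    rw [hxhat, mulVec_neg, mulVec_mulVec, ← mul_assoc, ← mul_assoc,
      mul_nonsing_inv _ ((isUnit_iff_isUnit_det _).mp hIA), one_mul, mulVec_mulVec]
  rw [periodMap_eq_self_iff, hxhat', neg_add_cancel, mulVec_zero]

/-- `x̂(τ) = -(I - e^{-AT})⁻¹ (I - e^{-Aτ}) A⁻¹ B` is a fixed point of the period map
sending `x(0)` to `x(T)`, where the dynamics are `dx/dt = Ax + B` on `[0,τ]`
(solution `e^{At}x₀ + (e^{At}-I)A⁻¹B`) and `dx/dt = Ax` on `[τ,T]` (solution `e^{At}x₀`). -/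
theorem stmt_4 {n : ℕ} (A : Matrix (Fin n) (Fin n) ℝ) (B : Fin n → ℝ) (T τ : ℝ)
    (hT : 0 < T) (hτ : τ ∈ Set.Icc 0 T)
    (hA : IsUnit A)
    (hIA : IsUnit ((1 : Matrix (Fin n) (Fin n) ℝ) - NormedSpace.exp ((-T) • A)))
    (xhat : Fin n → ℝ)
    (hxhat : xhat = -((((1 : Matrix (Fin n) (Fin n) ℝ) - NormedSpace.exp ((-T) • A))⁻¹
        * ((1 : Matrix (Fin n) (Fin n) ℝ) - NormedSpace.exp ((-τ) • A)) * A⁻¹).mulVec B)) :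
    (NormedSpace.exp ((T - τ) • A)).mulVec
        ((NormedSpace.exp (τ • A)).mulVec xhat
          + ((NormedSpace.exp (τ • A)) - 1).mulVec (A⁻¹.mulVec B))
      = xhat :=
  stmt_4_general A B T τ hIA xhat hxhat
end

section
/- Let H be a symmetric positive definite n×n matrix, and suppose for all x ∈ ℝⁿ and all f with |f| ≤ 1 we have xᵀH(Ax+Bf) + ε(xᵀHx - 1) ≤ 0 for some ε > 0. Let x(t) be an absolutely continuous solution of dx/dt = A x + B f(t) with measurable f satisfying |f(t)| ≤ 1 for all t. If x(0)ᵀ H x(0) ≤ 1, then x(t)ᵀ H x(t) ≤ 1 for all t ≥ 0 (the ellipsoid E = {x : xᵀHx ≤ 1} is forward invariant). -/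
open Matrix Real Set

/-!
The Lyapunov condition says that along any trajectory `V(t) = x(t)ᵀ H x(t)` satisfies
`V' = 2 x(t)ᵀ H x'(t) ≤ -2ε (V - 1)`, so `(V(t) - 1) e^{2εt}` is nonincreasing and
`V(0) ≤ 1` forces `V(t) ≤ 1` for all `t ≥ 0`.
-/

variable {ι κ : Type*} [Fintype ι]

theorem HasDerivAt.dotProduct {u v : ℝ → ι → ℝ} {u' v' : ι → ℝ} {t : ℝ}
    (hu : HasDerivAt u u' t) (hv : HasDerivAt v v' t) :
    HasDerivAt (fun s => u s ⬝ᵥ v s) (u' ⬝ᵥ v t + u t ⬝ᵥ v') t := by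
  change HasDerivAt (fun s => ∑ i, u s i * v s i) (∑ i, u' i * v t i + ∑ i, u t i * v' i) t
  rw [← Finset.sum_add_distrib]
  exact HasDerivAt.fun_sum fun i _ => (hasDerivAt_pi.mp hu i).mul (hasDerivAt_pi.mp hv i)

theorem HasDerivAt.mulVec [Fintype κ] (M : Matrix κ ι ℝ) {x : ℝ → ι → ℝ} {x' : ι → ℝ} {t : ℝ} (hx : HasDerivAt x x' t) :
    HasDerivAt (fun s => M *ᵥ x s) (M *ᵥ x') t :=
  M.mulVecLin.toContinuousLinearMap.hasFDerivAt.comp_hasDerivAt t hx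

theorem Matrix.IsSymm.dotProduct_mulVec_comm {R : Type*} [CommSemiring R] {H : Matrix ι ι R}
    (hH : H.IsSymm) (v w : ι → R) : v ⬝ᵥ H *ᵥ w = w ⬝ᵥ H *ᵥ v := by
  rw [dotProduct_mulVec, ← mulVec_transpose, dotProduct_comm, hH.eq]

theorem HasDerivAt.quadForm {H : Matrix ι ι ℝ} (hH : H.IsSymm) {x : ℝ → ι → ℝ} {x' : ι → ℝ}
    {t : ℝ} (hx : HasDerivAt x x' t) :
    HasDerivAt (fun s => x s ⬝ᵥ H *ᵥ x s) (2 * (x t ⬝ᵥ H *ᵥ x')) t := by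
  convert hx.dotProduct (hx.mulVec H) using 1
  rw [hH.dotProduct_mulVec_comm x']
  ring

theorem antitoneOn_sub_mul_exp_of_hasDerivAt_le {V V' : ℝ → ℝ} {a c : ℝ}
    (hV : ∀ s, 0 ≤ s → HasDerivAt V (V' s) s) (hV' : ∀ s, 0 ≤ s → V' s ≤ -c * (V s - a)) :
    AntitoneOn (fun s => (V s - a) * exp (c * s)) (Ici 0) := by
  have hderiv : ∀ s, 0 ≤ s → HasDerivAt (fun s => (V s - a) * exp (c * s))
      ((V' s + c * (V s - a)) * exp (c * s)) s := by
    intro s hs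
    refine (((hV s hs).sub_const a).mul (hasDerivAt_const_mul c).exp).congr_deriv ?_
    ring
  refine antitoneOn_of_deriv_nonpos (convex_Ici 0)
    (fun s hs => (hderiv s hs).continuousAt.continuousWithinAt)
    (fun s hs => ?_) (fun s hs => ?_) <;> rw [interior_Ici] at hs
  · exact (hderiv s hs.le).differentiableAt.differentiableWithinAt
  · rw [(hderiv s hs.le).deriv]
    exact mul_nonpos_of_nonpos_of_nonneg (by linarith [hV' s hs.le]) (exp_pos _).le

theorem le_of_hasDerivAt_le_neg_mul_sub {V V' : ℝ → ℝ} {a c : ℝ}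
    (hV : ∀ s, 0 ≤ s → HasDerivAt V (V' s) s) (hV' : ∀ s, 0 ≤ s → V' s ≤ -c * (V s - a))
    (h0 : V 0 ≤ a) {t : ℝ} (ht : 0 ≤ t) : V t ≤ a := by
  have hmono := antitoneOn_sub_mul_exp_of_hasDerivAt_le hV hV' self_mem_Ici ht ht
  simp only [mul_zero, exp_zero, mul_one] at hmono
  have : (V t - a) * exp (c * t) ≤ 0 := hmono.trans (sub_nonpos.mpr h0)
  linarith [nonpos_of_mul_nonpos_left this (exp_pos _)]

theorem stmt_6_general {n : ℕ} (A H : Matrix (Fin n) (Fin n) ℝ) (B : Fin n → ℝ) (ε : ℝ)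
    (hH : H.IsSymm)
    (hsector : ∀ (x : Fin n → ℝ) (f : ℝ), |f| ≤ 1 →
      x ⬝ᵥ H.mulVec (A.mulVec x + f • B) + ε * (x ⬝ᵥ H.mulVec x - 1) ≤ 0)
    (x : ℝ → Fin n → ℝ) (f : ℝ → ℝ)
    (hf : ∀ t, |f t| ≤ 1)
    (hx : ∀ t, 0 ≤ t → HasDerivAt x (A.mulVec (x t) + f t • B) t)
    (h0 : x 0 ⬝ᵥ H.mulVec (x 0) ≤ 1) :
    ∀ t, 0 ≤ t → x t ⬝ᵥ H.mulVec (x t) ≤ 1 := by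
  intro t ht
  refine le_of_hasDerivAt_le_neg_mul_sub (c := 2 * ε) (fun s hs => (hx s hs).quadForm hH)
    (fun s _ => ?_) h0 ht
  linarith [hsector (x s) (f s) (hf s)]

/-- Forward invariance of the ellipsoid `E = {x : xᵀHx ≤ 1}` for solutions of
`dx/dt = Ax + Bf(t)` with `|f(t)| ≤ 1`, under the quadratic Lyapunov condition. -/
theorem stmt_6 {n : ℕ} (A H : Matrix (Fin n) (Fin n) ℝ) (B : Fin n → ℝ) (ε : ℝ)
    (hε : 0 < ε) (hH : H.IsSymm) (hHpd : H.PosDef)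
    (hsector : ∀ (x : Fin n → ℝ) (f : ℝ), |f| ≤ 1 →
      x ⬝ᵥ H.mulVec (A.mulVec x + f • B) + ε * (x ⬝ᵥ H.mulVec x - 1) ≤ 0)
    (x : ℝ → Fin n → ℝ) (f : ℝ → ℝ)
    (hf : ∀ t, |f t| ≤ 1)
    (hx : ∀ t, 0 ≤ t → HasDerivAt x (A.mulVec (x t) + f t • B) t)
    (h0 : x 0 ⬝ᵥ H.mulVec (x 0) ≤ 1) :
    ∀ t, 0 ≤ t → x t ⬝ᵥ H.mulVec (x t) ≤ 1 :=
  stmt_6_general A H B ε hH hsector x f hf hx h0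
end

section
/- With the notation of the preceding setup (g, h indicators of [0,τ) and [0,τ⁰) on [0,T], v = (τ-τ⁰)/T, u(t) = ∫_0^t (g - h - v)), one has ∫_0^T u(t)² dt ≤ (T²/3) ∫_0^T v² dt = (T³/3) v². -/
/-!
Since `∫₀ᵗ 1_{[0,a)} = min t a`, the function `u` is the piecewise linear function
`t ↦ min t τ - min t τ⁰ - v t`. Integrating its square over the three pieces cut out by
`τ⁰ ≤ τ` (after a swap, which only changes the sign of `u`) gives
`(T³/3) v² - ∫₀ᵀ u² = (τ - τ⁰)² ((T - τ)(2τ + τ⁰) + (τ - τ⁰)(τ + τ⁰)) / (3T) ≥ 0`.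
-/

open Set intervalIntegral MeasureTheory

theorem integral_add_mul_sq (a b p q : ℝ) :
    ∫ t in a..b, (p + q * t) ^ 2
      = p ^ 2 * (b - a) + p * q * (b ^ 2 - a ^ 2) + q ^ 2 * (b ^ 3 - a ^ 3) / 3 := by
  have hderiv (t : ℝ) : HasDerivAt (fun t => p ^ 2 * t + p * q * t ^ 2 + q ^ 2 * (t ^ 3 / 3))
      ((p + q * t) ^ 2) t := by
    refine ((((hasDerivAt_id' t).const_mul _).add (((hasDerivAt_id' t).pow 2).const_mul _)).add
      ((((hasDerivAt_id' t).pow 3).div_const 3).const_mul _)).congr_deriv ?_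
    push_cast
    ring
  rw [integral_eq_sub_of_hasDerivAt (fun t _ => hderiv t)
    ((by fun_prop : Continuous fun t : ℝ => (p + q * t) ^ 2).intervalIntegrable a b)]
  ring

theorem intervalIntegrable_indicator_Ico (a b c x y : ℝ) :
    IntervalIntegrable ((Ico a b).indicator fun _ => c) volume x y :=
  ((integrableOn_const measure_Ico_lt_top.ne).integrable_indicator
    measurableSet_Ico).intervalIntegrable

theorem integral_indicator_Ico_zero {a t : ℝ} (ha : 0 ≤ a) (ht : 0 ≤ t) :
    ∫ s in (0 : ℝ)..t, (Ico 0 a).indicator (fun _ => (1 : ℝ)) s = min t a := by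
  rw [integral_of_le ht, setIntegral_indicator measurableSet_Ico, setIntegral_const, smul_eq_mul,
    mul_one]
  have hinter : Ioc 0 t ∩ Ico 0 a = Ioc 0 t ∩ Iio a := by
    ext x
    simp only [mem_inter_iff, mem_Ioc, mem_Ico, mem_Iio]
    grind
  have hae : (Ioc 0 t ∩ Ico 0 a : Set ℝ) =ᵐ[volume] Ioc 0 (min t a) := by
    rw [hinter, ← Ioc_inter_Iic]
    exact (ae_eq_refl _).inter Iio_ae_eq_Iic
  rw [measureReal_def, measure_congr hae, Real.volume_Ioc, sub_zero,
    ENNReal.toReal_ofReal (le_min ht ha)]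

theorem integral_indicator_sub_indicator_sub_const {a b t : ℝ} (c : ℝ) (ha : 0 ≤ a) (hb : 0 ≤ b)
    (ht : 0 ≤ t) :
    ∫ s in (0 : ℝ)..t, ((Ico 0 a).indicator (fun _ => (1 : ℝ)) s
        - (Ico 0 b).indicator (fun _ => (1 : ℝ)) s - c)
      = min t a - min t b - c * t := by
  have hia := intervalIntegrable_indicator_Ico 0 a 1 0 t
  have hib := intervalIntegrable_indicator_Ico 0 b 1 0 t
  rw [integral_sub (hia.sub hib) intervalIntegrable_const, integral_sub hia hib,
    integral_indicator_Ico_zero ha ht, integral_indicator_Ico_zero hb ht,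
    intervalIntegral.integral_const, smul_eq_mul, sub_zero, mul_comm]

theorem integral_sq_min_sub_min_sub_mul_le_of_le {T τ σ : ℝ} (hT : 0 < T) (hσ : 0 ≤ σ)
    (hστ : σ ≤ τ) (hτT : τ ≤ T) :
    ∫ t in (0 : ℝ)..T, (min t τ - min t σ - (τ - σ) / T * t) ^ 2
      ≤ T ^ 3 / 3 * ((τ - σ) / T) ^ 2 := by
  set w := (τ - σ) / T with hw
  set f := fun t : ℝ => (min t τ - min t σ - w * t) ^ 2
  have hf : Continuous f := by fun_prop
  have hsplit : ∫ t in (0 : ℝ)..T, f t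
      = (∫ t in (0 : ℝ)..σ, f t) + (∫ t in σ..τ, f t) + ∫ t in τ..T, f t := by
    rw [integral_add_adjacent_intervals (hf.intervalIntegrable _ _) (hf.intervalIntegrable _ _),
      integral_add_adjacent_intervals (hf.intervalIntegrable _ _) (hf.intervalIntegrable _ _)]
  have hleft : ∫ t in (0 : ℝ)..σ, f t = ∫ t in (0 : ℝ)..σ, (0 + -w * t) ^ 2 := by
    refine integral_congr fun t ht => ?_
    rw [uIcc_of_le hσ] at ht
    simp only [f, min_eq_left (ht.2.trans hστ), min_eq_left ht.2]
    ring
  have hmiddle : ∫ t in σ..τ, f t = ∫ t in σ..τ, (-σ + (1 - w) * t) ^ 2 := by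
    refine integral_congr fun t ht => ?_
    rw [uIcc_of_le hστ] at ht
    simp only [f, min_eq_left ht.2, min_eq_right ht.1]
    ring
  have hright : ∫ t in τ..T, f t = ∫ t in τ..T, ((τ - σ) + -w * t) ^ 2 := by
    refine integral_congr fun t ht => ?_
    rw [uIcc_of_le hτT] at ht
    simp only [f, min_eq_right ht.1, min_eq_right (hστ.trans ht.1)]
    ring
  have hgap : T ^ 3 / 3 * w ^ 2 - ∫ t in (0 : ℝ)..T, f t
      = (τ - σ) ^ 2 * ((T - τ) * (2 * τ + σ) + (τ - σ) * (τ + σ)) / (3 * T) := by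
    rw [hsplit, hleft, hmiddle, hright, integral_add_mul_sq, integral_add_mul_sq,
      integral_add_mul_sq, hw]
    field_simp
    ring
  have hgap_nonneg : 0 ≤ (τ - σ) ^ 2 * ((T - τ) * (2 * τ + σ) + (τ - σ) * (τ + σ)) / (3 * T) := by
    have := mul_nonneg (sub_nonneg.2 hτT) (by linarith : 0 ≤ 2 * τ + σ)
    have := mul_nonneg (sub_nonneg.2 hστ) (by linarith : 0 ≤ τ + σ)
    positivity
  linarith

theorem integral_sq_min_sub_min_sub_mul_le {T τ σ : ℝ} (hT : 0 < T) (hτ : τ ∈ Icc 0 T)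
    (hσ : σ ∈ Icc 0 T) :
    ∫ t in (0 : ℝ)..T, (min t τ - min t σ - (τ - σ) / T * t) ^ 2
      ≤ T ^ 3 / 3 * ((τ - σ) / T) ^ 2 := by
  rcases le_total σ τ with hστ | hτσ
  · exact integral_sq_min_sub_min_sub_mul_le_of_le hT hσ.1 hστ hτ.2
  · convert integral_sq_min_sub_min_sub_mul_le_of_le hT hτ.1 hτσ hσ.2 using 1
    · congr 1
      ext t
      ring
    · ring

/-- With `g`, `h` the indicators of `[0,τ)` and `[0,τ⁰)` on `[0,T]`, `v = (τ-τ⁰)/T`, and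
`u(t) = ∫_0^t (g - h - v)`, one has `∫_0^T u² ≤ (T²/3) ∫_0^T v² = (T³/3) v²`. -/
theorem stmt_13 (T τ τ0 : ℝ) (hT : 0 < T)
    (hτ : τ ∈ Set.Icc 0 T) (hτ0 : τ0 ∈ Set.Icc 0 T)
    (g h : ℝ → ℝ)
    (hg : g = Set.indicator (Set.Ico (0 : ℝ) τ) (fun _ => (1 : ℝ)))
    (hh : h = Set.indicator (Set.Ico (0 : ℝ) τ0) (fun _ => (1 : ℝ)))
    (v : ℝ) (hv : v = (τ - τ0) / T)
    (u : ℝ → ℝ)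
    (hu : ∀ t : ℝ, u t = ∫ s in (0 : ℝ)..t, (g s - h s - v)) :
    (∫ t in (0 : ℝ)..T, (u t) ^ 2) ≤ (T ^ 2 / 3) * ∫ t in (0 : ℝ)..T, v ^ 2
      ∧ (T ^ 2 / 3) * (∫ t in (0 : ℝ)..T, v ^ 2) = (T ^ 3 / 3) * v ^ 2 := by
  subst hg hh hv
  have hu_eq : EqOn (fun t => u t ^ 2)
      (fun t => (min t τ - min t τ0 - (τ - τ0) / T * t) ^ 2) (uIcc 0 T) := fun t ht => by
    rw [uIcc_of_le hT.le] at ht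
    simp only [hu, integral_indicator_sub_indicator_sub_const _ hτ.1 hτ0.1 ht.1]
  have hconst : ∫ t in (0 : ℝ)..T, ((τ - τ0) / T) ^ 2 = T * ((τ - τ0) / T) ^ 2 := by
    rw [intervalIntegral.integral_const, smul_eq_mul, sub_zero]
  rw [integral_congr hu_eq, hconst]
  exact ⟨(integral_sq_min_sub_min_sub_mul_le hT hτ hτ0).trans_eq (by ring), by ring⟩
end

section
/- Let σ⁰ : ℝ → ℝ be differentiable and T-periodic with |dσ⁰/dt| ≤ L₁, let σ_*, T > 0 with σ_* > T L₁, let σ₁ ∈ ℝ, and suppose σ⁰(τ⁰) = σ₁ + σ_* τ⁰/T for some τ⁰ ∈ (0,T). Suppose τₙ ∈ [0,T] and the equation σ(nT + τₙ) = σ₁ + σ_* τₙ/T holds, where σ = σ⁰ + σ_d. Set vₙ = (τₙ - τ⁰)/T. Then if σ_d(nT+τₙ) ≠ 0 we have 1/(σ_* + T L₁) ≤ vₙ / σ_d(nT + τₙ) ≤ 1/(σ_* - T L₁), and if σ_d(nT+τₙ) = 0 then vₙ = 0. -/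
private lemma aux_sector (a b vn d : ℝ) (ha : 0 < a) (hb : 0 < b)
    (h1 : a * vn ≤ d) (h2 : d ≤ b * vn) (hv : 0 < vn) :
    0 ≤ vn / d ∧ vn / d ≤ 1 / a ∧ 1 / b ≤ vn / d := by
  have hd0 : 0 < d := lt_of_lt_of_le (mul_pos ha hv) h1
  refine ⟨div_nonneg hv.le hd0.le, ?_, ?_⟩
  · rw [div_le_div_iff₀ hd0 ha]
    nlinarith
  · rw [div_le_div_iff₀ hb hd0]
    nlinarith

/-- Case (i) of Lemma 2: if the switching instant is the root of the modulation equation,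
then the ratio `vₙ / σ_d(nT+τₙ)` lies in the sector `[1/(σ_*+TL₁), 1/(σ_*-TL₁)]`
(and `vₙ = 0` whenever `σ_d(nT+τₙ) = 0`). -/
theorem stmt_14 (T L1 σs σ1 τ0 : ℝ) (n : ℕ)
    (σ0 σ : ℝ → ℝ)
    (hT : 0 < T) (hL1 : 0 ≤ L1) (hσs : T * L1 < σs)
    (hdiff : Differentiable ℝ σ0)
    (hder : ∀ t, |deriv σ0 t| ≤ L1)
    (hper : ∀ t, σ0 (t + T) = σ0 t)
    (hτ0 : τ0 ∈ Set.Ioo 0 T)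
    (heq0 : σ0 τ0 = σ1 + σs * τ0 / T)
    (τn : ℝ) (hτn : τn ∈ Set.Icc 0 T)
    (heqn : σ (n * T + τn) = σ1 + σs * τn / T)
    (σd : ℝ → ℝ) (hσd : ∀ t, σd t = σ t - σ0 t)
    (vn : ℝ) (hvn : vn = (τn - τ0) / T) :
    0 ≤ vn / σd (n * T + τn)
      ∧ vn / σd (n * T + τn) ≤ 1 / (σs - T * L1)
      ∧ (σd (n * T + τn) ≠ 0 → 1 / (σs + T * L1) ≤ vn / σd (n * T + τn))
      ∧ (σd (n * T + τn) = 0 → vn = 0) := by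
  have hP : Function.Periodic σ0 T := hper
  have hσ0per : σ0 (n * T + τn) = σ0 τn := by
    have := (hP.nat_mul n) τn
    simpa [add_comm] using this
  set d := σd (n * T + τn) with hd
  set k := σ0 τn - σ0 τ0 with hkdef
  have hτT : τn - τ0 = T * vn := by
    rw [hvn]; field_simp
  have hdval : d = σs * vn - k := by
    rw [hd, hσd, hσ0per, heqn, hkdef, heq0, hvn]
    field_simp
    ring
  -- Lipschitz bound
  have hlip : |k| ≤ L1 * |τn - τ0| := by
    have h1 : ∀ x ∈ (Set.univ : Set ℝ), DifferentiableAt ℝ σ0 x := fun x _ => hdiff x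
    have h2 : ∀ x ∈ (Set.univ : Set ℝ), ‖deriv σ0 x‖ ≤ L1 := fun x _ => by
      simpa [Real.norm_eq_abs] using hder x
    have := convex_univ.norm_image_sub_le_of_norm_deriv_le h1 h2
      (Set.mem_univ τ0) (Set.mem_univ τn)
    simpa [Real.norm_eq_abs, hkdef] using this
  have hk : |k| ≤ T * L1 * |vn| := by
    calc |k| ≤ L1 * |τn - τ0| := hlip
    _ = T * L1 * |vn| := by
        rw [hτT, abs_mul, abs_of_pos hT]; ring
  have ha : 0 < σs - T * L1 := by linarith
  have hb : 0 < σs + T * L1 := by nlinarith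
  rcases lt_trichotomy vn 0 with hv | hv | hv
  · -- vn < 0 : use -vn, -d
    have habs : |vn| = -vn := abs_of_neg hv
    have hk' := abs_le.mp hk
    rw [habs] at hk'
    have h1 : (σs - T * L1) * (-vn) ≤ -d := by rw [hdval]; nlinarith [hk'.1, hk'.2]
    have h2 : -d ≤ (σs + T * L1) * (-vn) := by rw [hdval]; nlinarith [hk'.1, hk'.2]
    obtain ⟨g1, g2, g3⟩ := aux_sector (σs - T * L1) (σs + T * L1) (-vn) (-d)
      ha hb h1 h2 (by linarith)
    rw [neg_div_neg_eq] at g1 g2 g3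
    exact ⟨g1, g2, fun _ => g3, fun hd0 => by
      have : -d > 0 := lt_of_lt_of_le (mul_pos ha (by linarith)) h1
      simp [hd0] at this⟩
  · -- vn = 0
    have hk0 : k = 0 := by
      have : |k| ≤ 0 := by simpa [hv] using hk
      simpa using le_antisymm this (abs_nonneg k)
    have hd0 : d = 0 := by rw [hdval, hv, hk0]; ring
    refine ⟨by rw [hv, zero_div], by rw [hv, zero_div]; exact le_of_lt (one_div_pos.mpr ha), fun h => absurd hd0 h, fun _ => hv⟩
  · -- vn > 0
    have habs : |vn| = vn := abs_of_pos hv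
    have hk' := abs_le.mp hk
    rw [habs] at hk'
    have h1 : (σs - T * L1) * vn ≤ d := by rw [hdval]; nlinarith [hk'.1, hk'.2]
    have h2 : d ≤ (σs + T * L1) * vn := by rw [hdval]; nlinarith [hk'.1, hk'.2]
    obtain ⟨g1, g2, g3⟩ := aux_sector (σs - T * L1) (σs + T * L1) vn d ha hb h1 h2 hv
    exact ⟨g1, g2, fun _ => g3, fun hd0 => by
      have : 0 < d := lt_of_lt_of_le (mul_pos ha hv) h1
      simp [hd0] at this⟩
end

section
/- Let σ⁰ : ℝ → ℝ be differentiable with |dσ⁰/dt| ≤ L₁ and T-periodic, σ_* > T L₁ > 0, σ₁ ∈ ℝ, and τ⁰ ∈ (0,T) with σ⁰(τ⁰) = σ₁ + σ_* τ⁰/T. Suppose σ(nT) < σ₁ (so the pulse duration is τₙ = 0) and set vₙ = -τ⁰/T and σ_d = σ - σ⁰. Then σ_d(nT) < vₙ(σ_* - (dσ⁰/dt)(t_s)) < 0 for some t_s ∈ [0, τ⁰], and consequently 0 ≤ vₙ/σ_d(nT) ≤ 1/(σ_* - T L₁). -/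
/-! By periodicity `σ⁰(nT) = σ⁰(0)`, and the mean value theorem on `[0, τ⁰]` gives
`σ⁰(τ⁰) - σ⁰(0) = τ⁰ σ⁰'(t_s)`. With `σ⁰(τ⁰) = σ₁ + σ_* τ⁰ / T` this turns into the identity
`σ_d(nT) - vₙ (σ_* - T σ⁰'(t_s)) = σ(nT) - σ₁ < 0`, while `σ_* - T σ⁰'(t_s) ≥ σ_* - T L₁ > 0`.
The bounds on `vₙ / σ_d(nT)` are then elementary. -/

lemma div_le_one_div_of_lt_mul_of_mul_neg {v d c : ℝ} (hc : 0 < c) (hd : d < v * c)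
    (hvc : v * c < 0) : v / d ≤ 1 / c := by
  rw [div_le_iff_of_neg (hd.trans hvc), one_div_mul_eq_div, div_le_iff₀ hc]
  exact hd.le

theorem stmt_15_general (T L1 σs σ1 τ0 : ℝ) (n : ℕ)
    (σ0 σ : ℝ → ℝ)
    (hT : 0 < T) (hσs : T * L1 < σs)
    (hdiff : Differentiable ℝ σ0)
    (hder : ∀ t, |deriv σ0 t| ≤ L1)
    (hper : ∀ t, σ0 (t + T) = σ0 t)
    (hτ0 : τ0 ∈ Set.Ioo 0 T)
    (heq0 : σ0 τ0 = σ1 + σs * τ0 / T)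
    (hlt : σ (n * T) < σ1)
    (σd : ℝ → ℝ) (hσd : ∀ t, σd t = σ t - σ0 t)
    (vn : ℝ) (hvn : vn = -τ0 / T) :
    (∃ ts ∈ Set.Icc 0 τ0,
        σd (n * T) < vn * (σs - T * deriv σ0 ts) ∧ vn * (σs - T * deriv σ0 ts) < 0)
      ∧ 0 ≤ vn / σd (n * T) ∧ vn / σd (n * T) ≤ 1 / (σs - T * L1) := by
  obtain ⟨ts, hts, hmvt⟩ := exists_deriv_eq_slope σ0 hτ0.1 hdiff.continuous.continuousOn
    fun x _ => (hdiff x).differentiableWithinAt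
  have hslope : σ0 τ0 - σ0 0 = deriv σ0 ts * τ0 := by
    rw [hmvt, sub_zero, div_mul_cancel₀ _ hτ0.1.ne']
  have hgap : σd (n * T) - vn * (σs - T * deriv σ0 ts) = σ (n * T) - σ1 := by
    have hτ0T : τ0 / T * T = τ0 := div_mul_cancel₀ _ hT.ne'
    rw [hσd, Function.Periodic.nat_mul_eq hper, hvn]
    linear_combination -heq0 + hslope - deriv σ0 ts * hτ0T
  have hrate : σs - T * L1 ≤ σs - T * deriv σ0 ts := by
    gcongr
    exact (abs_le.mp (hder ts)).2
  have hvn_neg : vn < 0 := hvn ▸ div_neg_of_neg_of_pos (neg_neg_of_pos hτ0.1) hT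
  have hupper : vn * (σs - T * deriv σ0 ts) < 0 := mul_neg_of_neg_of_pos hvn_neg (by linarith)
  have hlower : σd (n * T) < vn * (σs - T * deriv σ0 ts) := by linarith
  refine ⟨⟨ts, Set.Ioo_subset_Icc_self hts, hlower, hupper⟩,
    (div_pos_of_neg_of_neg hvn_neg (hlower.trans hupper)).le, ?_⟩
  calc vn / σd (n * T) ≤ 1 / (σs - T * deriv σ0 ts) :=
        div_le_one_div_of_lt_mul_of_mul_neg (by linarith) hlower hupper
    _ ≤ 1 / (σs - T * L1) := one_div_le_one_div_of_le (by linarith) hrate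

/-- Case (ii) of Lemma 2: if `σ(nT) < σ₁` (zero pulse width, `vₙ = -τ⁰/T`), then
`σ_d(nT) < vₙ(σ_* - T·σ⁰'(t_s)) < 0` for some `t_s ∈ [0,τ⁰]`, and consequently
`0 ≤ vₙ/σ_d(nT) ≤ 1/(σ_* - TL₁)`. -/
theorem stmt_15 (T L1 σs σ1 τ0 : ℝ) (n : ℕ)
    (σ0 σ : ℝ → ℝ)
    (hT : 0 < T) (hL1 : 0 ≤ L1) (hσs : T * L1 < σs)
    (hdiff : Differentiable ℝ σ0)
    (hder : ∀ t, |deriv σ0 t| ≤ L1)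
    (hper : ∀ t, σ0 (t + T) = σ0 t)
    (hτ0 : τ0 ∈ Set.Ioo 0 T)
    (heq0 : σ0 τ0 = σ1 + σs * τ0 / T)
    (hlt : σ (n * T) < σ1)
    (σd : ℝ → ℝ) (hσd : ∀ t, σd t = σ t - σ0 t)
    (vn : ℝ) (hvn : vn = -τ0 / T) :
    (∃ ts ∈ Set.Icc 0 τ0,
        σd (n * T) < vn * (σs - T * deriv σ0 ts) ∧ vn * (σs - T * deriv σ0 ts) < 0)
      ∧ 0 ≤ vn / σd (n * T) ∧ vn / σd (n * T) ≤ 1 / (σs - T * L1) :=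
  stmt_15_general T L1 σs σ1 τ0 n σ0 σ hT hσs hdiff hder hper hτ0 heq0 hlt σd hσd vn hvn
end
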